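/- arXiv:1705.08113 — 2 statements merged into one kernel-verified Lean document; each statement's English description precedes it below -/
import Mathlib

section
/- Let I=(i_1,…,i_r) be a composition of n. The multiset of descent compositions {D(T) : T a standard immaculate tableau of shape I} is equal to the multiset {mirror image of C(π̂^{-1}) : π a set partition of {1,…,n} with K(π)=I}, where π̂^{-1} denotes the inverse of the permutation π̂. -/
/-- `π` is a set partition of `{1,…,n}`. -/
def IsSetPartitionOn (n : ℕ) (π : Finset (Finset ℕ)) : Prop :=
  (∀ B ∈ π, B.Nonempty) ∧
  (∀ B ∈ π, ∀ C ∈ π, B ≠ C → Disjoint B C) ∧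
  (∀ x, x ∈ Finset.Icc 1 n ↔ ∃ B ∈ π, x ∈ B)

/-- Insert a block into a list of blocks sorted by decreasing maxima. -/
def insertByMax (B : Finset ℕ) : List (Finset ℕ) → List (Finset ℕ)
  | [] => [B]
  | C :: L => if C.max ≤ B.max then B :: C :: L else C :: insertByMax B L

/-- Sort a list of blocks by decreasing maxima. -/
def sortByMax : List (Finset ℕ) → List (Finset ℕ)
  | [] => []
  | B :: L => insertByMax B (sortByMax L)

/-- The blocks of `π`, listed so that their maxima decrease. -/
noncomputable def blocksByMax (π : Finset (Finset ℕ)) : List (Finset ℕ) :=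
  sortByMax π.toList

/-- `K(π)`: the composition formed by the block sizes of `π`, the blocks being ordered
so that their maxima decrease. -/
noncomputable def Kcomp (π : Finset (Finset ℕ)) : List ℕ :=
  (blocksByMax π).map Finset.card

/-- `π̂`: the word obtained by concatenating the blocks of `π` (ordered by decreasing
maxima), each block being listed increasingly. -/
noncomputable def hatWord (π : Finset (Finset ℕ)) : List ℕ :=
  ((blocksByMax π).map (fun B => B.sort (· ≤ ·))).flatten

/-- The descent set of a word (with 1-based positions): `{i : 1 ≤ i ≤ n−1, wᵢ > wᵢ₊₁}`. -/
def desSet (w : List ℕ) : Finset ℕ :=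
  (Finset.range w.length).filter (fun i => 0 < i ∧ w.getD i 0 < w.getD (i - 1) 0)

/-- The inverse of a permutation of `{1,…,n}` written as a word. -/
def invWord (w : List ℕ) : List ℕ :=
  (List.range w.length).map (fun j => w.idxOf (j + 1) + 1)

/-- The composition of `n` whose proper partial sums are the elements of `S`. -/
def compOfSet (n : ℕ) (S : Finset ℕ) : List ℕ :=
  let l := S.sort (· ≤ ·) ++ [n]
  List.zipWith (fun a b => a - b) l (0 :: l)

/-- `T` is a standard immaculate tableau of shape `I` (rows listed from top to bottom):
rows have lengths `I`, the entries are `1,…,n` each once, rows strictly increase, and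
the first column strictly increases. -/
def IsSIT (I : List ℕ) (T : List (List ℕ)) : Prop :=
  T.map List.length = I ∧
  T.flatten.Perm ((List.range I.sum).map (· + 1)) ∧
  (∀ row ∈ T, row.Chain' (· < ·)) ∧
  (T.map (fun row => row.headD 0)).Chain' (· < ·)

/-- The descent set of a standard immaculate tableau:
`{i : i+1 lies in a strictly lower row of T than i}`. -/
def tabDesSet (n : ℕ) (T : List (List ℕ)) : Finset ℕ :=
  (Finset.range n).filter (fun i => 0 < i ∧
    T.findIdx (fun row => decide (i ∈ row)) < T.findIdx (fun row => decide (i + 1 ∈ row)))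


/-!
Reflecting entries by `x ↦ n + 1 - x` turns the rows of a standard immaculate tableau into the
blocks of a set partition of `{1,…,n}`: increasing rows become blocks, and the increasing first
column says exactly that the blocks, taken in the order of the rows, have decreasing maxima, which
is the order defining `K(π)` and `π̂`. So `T ↦ π` is a bijection preserving the shape.

Now `i ∈ D(T)` iff the block of `n + 1 - i` precedes the block of `n - i`. Putting `j = n - i`,
this says that `j + 1` precedes `j` in `π̂` (within a block `j` comes first, as blocks are listed
increasingly), i.e. that `j` is a descent of `π̂⁻¹`. Hence `D(T)` is the reflection `i ↦ n - i`
of the descent set of `π̂⁻¹`, and reflecting a subset of `{1,…,n-1}` reverses its composition.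
-/

def MaxGe (B C : Finset ℕ) : Prop := C.max ≤ B.max

instance : DecidableRel MaxGe := fun B C => inferInstanceAs (Decidable (C.max ≤ B.max))
instance : Std.Total MaxGe := ⟨fun B C => le_total C.max B.max⟩
instance : IsTrans (Finset ℕ) MaxGe := ⟨fun _ _ _ hAB hBC => hBC.trans hAB⟩

theorem insertByMax_eq_orderedInsert (B : Finset ℕ) (L : List (Finset ℕ)) :
    insertByMax B L = L.orderedInsert MaxGe B := by
  induction L with
  | nil => rfl
  | cons C L ih => simp only [insertByMax, List.orderedInsert, ih]; rfl

theorem sortByMax_eq_insertionSort (L : List (Finset ℕ)) :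
    sortByMax L = L.insertionSort MaxGe := by
  induction L with
  | nil => rfl
  | cons B L ih => rw [sortByMax, ih, insertByMax_eq_orderedInsert]; rfl

section BlocksByMax

variable {π : Finset (Finset ℕ)}

theorem blocksByMax_perm (π : Finset (Finset ℕ)) : (blocksByMax π).Perm π.toList := by
  rw [blocksByMax, sortByMax_eq_insertionSort]
  exact List.perm_insertionSort _ _

theorem mem_blocksByMax {B : Finset ℕ} : B ∈ blocksByMax π ↔ B ∈ π := by
  rw [(blocksByMax_perm π).mem_iff, Finset.mem_toList]

theorem nodup_blocksByMax (π : Finset (Finset ℕ)) : (blocksByMax π).Nodup :=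
  (blocksByMax_perm π).nodup_iff.2 π.nodup_toList

theorem pairwise_blocksByMax_max_lt (h : Set.InjOn Finset.max (π : Set (Finset ℕ))) :
    (blocksByMax π).Pairwise (fun B C => C.max < B.max) := by
  have hsorted : (blocksByMax π).Pairwise MaxGe := by
    rw [blocksByMax, sortByMax_eq_insertionSort]
    exact List.pairwise_insertionSort _ _
  refine (hsorted.and (nodup_blocksByMax π)).imp_of_mem fun hB hC ⟨hge, hne⟩ =>
    lt_of_le_of_ne hge fun heq => hne ?_
  exact (h (mem_blocksByMax.1 hC) (mem_blocksByMax.1 hB) heq).symm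

theorem blocksByMax_toFinset {L : List (Finset ℕ)}
    (hL : L.Pairwise (fun B C => C.max < B.max)) : blocksByMax L.toFinset = L := by
  have hmax : (L.map Finset.max).Nodup := List.pairwise_map.2 (hL.imp ne_of_gt)
  refine List.Perm.eq_of_pairwise (fun _ _ _ _ hab hba => absurd hab (not_lt.2 hba.le)) ?_ hL
    ((blocksByMax_perm _).trans (List.toFinset_toList (hmax.of_map _)))
  refine pairwise_blocksByMax_max_lt fun B hB C hC => ?_
  exact List.inj_on_of_nodup_map hmax (List.mem_toFinset.1 hB) (List.mem_toFinset.1 hC)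

theorem IsSetPartitionOn.injOn_max {n : ℕ} (hπ : IsSetPartitionOn n π) :
    Set.InjOn Finset.max (π : Set (Finset ℕ)) := by
  intro B hB C hC hmax
  by_contra hBC
  obtain ⟨a, ha⟩ := Finset.max_of_nonempty (hπ.1 B hB)
  exact Finset.disjoint_left.1 (hπ.2.1 B hB C hC hBC) (Finset.mem_of_max ha)
    (Finset.mem_of_max (hmax ▸ ha))

end BlocksByMax

theorem mem_map_succ_range {n x : ℕ} :
    x ∈ (List.range n).map (· + 1) ↔ x ∈ Finset.Icc 1 n := by
  simp only [List.mem_map, List.mem_range, Finset.mem_Icc]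
  exact ⟨by omega, fun hx => ⟨x - 1, by omega, by omega⟩⟩

theorem nodup_map_succ_range (n : ℕ) : ((List.range n).map (· + 1)).Nodup :=
  List.nodup_range.map fun _ _ => Nat.succ_inj.1

section Reflection

variable {n x : ℕ} {s : Finset ℕ}

def revIcc (n x : ℕ) : ℕ := n + 1 - x

theorem revIcc_mem (hx : x ∈ Finset.Icc 1 n) : revIcc n x ∈ Finset.Icc 1 n := by
  simp only [Finset.mem_Icc, revIcc] at *; omega

theorem revIcc_revIcc (hx : x ∈ Finset.Icc 1 n) : revIcc n (revIcc n x) = x := by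
  simp only [Finset.mem_Icc, revIcc] at *; omega

theorem revIcc_lt_revIcc {y : ℕ} (hx : x ∈ Finset.Icc 1 n) (hy : y ∈ Finset.Icc 1 n) :
    revIcc n x < revIcc n y ↔ y < x := by
  simp only [Finset.mem_Icc, revIcc] at *; omega

theorem mem_image_revIcc (hx : x ∈ Finset.Icc 1 n) :
    x ∈ s.image (revIcc n) ↔ revIcc n x ∈ s :=
  ⟨fun h => by
    obtain ⟨y, hy, rfl⟩ := Finset.mem_image.1 h
    simp only [Finset.mem_Icc, revIcc] at hx ⊢
    rwa [show n + 1 - (n + 1 - y) = y by omega],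
   fun h => Finset.mem_image.2 ⟨_, h, revIcc_revIcc hx⟩⟩

theorem image_revIcc_subset (hs : s ⊆ Finset.Icc 1 n) : s.image (revIcc n) ⊆ Finset.Icc 1 n :=
  Finset.image_subset_iff.2 fun _ hx => revIcc_mem (hs hx)

theorem image_revIcc_image_revIcc (hs : s ⊆ Finset.Icc 1 n) :
    (s.image (revIcc n)).image (revIcc n) = s := by
  rw [Finset.image_image,
    Finset.image_congr (f := revIcc n ∘ revIcc n) (g := id) fun x hx => revIcc_revIcc (hs hx),
    Finset.image_id]

theorem card_image_revIcc (hs : s ⊆ Finset.Icc 1 n) : (s.image (revIcc n)).card = s.card :=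
  Finset.card_image_of_injOn fun x hx y hy hxy => by
    rw [← revIcc_revIcc (hs hx), ← revIcc_revIcc (hs hy)]; exact congrArg _ hxy

end Reflection

section RowsAndBlocks

variable {n : ℕ} {B : Finset ℕ} {row : List ℕ}

def rowOf (n : ℕ) (B : Finset ℕ) : List ℕ := (B.image (revIcc n)).sort (· ≤ ·)

def blockOf (n : ℕ) (row : List ℕ) : Finset ℕ := row.toFinset.image (revIcc n)

theorem mem_rowOf {x : ℕ} (hx : x ∈ Finset.Icc 1 n) : x ∈ rowOf n B ↔ revIcc n x ∈ B := by
  rw [rowOf, Finset.mem_sort, mem_image_revIcc hx]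

theorem mem_blockOf {x : ℕ} (hx : x ∈ Finset.Icc 1 n) :
    x ∈ blockOf n row ↔ revIcc n x ∈ row := by
  rw [blockOf, mem_image_revIcc hx, List.mem_toFinset]

theorem length_rowOf (hB : B ⊆ Finset.Icc 1 n) : (rowOf n B).length = B.card := by
  rw [rowOf, Finset.length_sort, card_image_revIcc hB]

theorem blockOf_rowOf (hB : B ⊆ Finset.Icc 1 n) : blockOf n (rowOf n B) = B := by
  rw [blockOf, rowOf, Finset.sort_toFinset, image_revIcc_image_revIcc hB]

theorem rowOf_blockOf (hrow : row.Pairwise (· < ·)) (hsub : row.toFinset ⊆ Finset.Icc 1 n) :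
    rowOf n (blockOf n row) = row := by
  rw [rowOf, blockOf, image_revIcc_image_revIcc hsub,
    List.toFinset_sort _ hrow.nodup]
  exact hrow.imp le_of_lt

theorem card_blockOf (hrow : row.Nodup) (hsub : row.toFinset ⊆ Finset.Icc 1 n) :
    (blockOf n row).card = row.length := by
  rw [blockOf, card_image_revIcc hsub, List.toFinset_card_of_nodup hrow]

theorem headD_rowOf (hB : B.Nonempty) (hsub : B ⊆ Finset.Icc 1 n) :
    (rowOf n B).headD 0 = revIcc n (B.max' hB) := by
  have hne : (B.image (revIcc n)).Nonempty := hB.image _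
  have hhead : (rowOf n B).headD 0 = (B.image (revIcc n)).min' hne := by
    rw [Finset.min'_eq_sorted_zero (h := hne), rowOf, List.headD_eq_head?_getD,
      List.head?_eq_getElem?, List.getElem?_eq_getElem]
    rfl
  rw [hhead]
  refine le_antisymm (Finset.min'_le _ _ (Finset.mem_image_of_mem _ (B.max'_mem hB)))
    (Finset.le_min' _ _ _ fun y hy => ?_)
  obtain ⟨b, hb, rfl⟩ := Finset.mem_image.1 hy
  have hbmax := B.le_max' b hb
  have := hsub hb
  simp only [Finset.mem_Icc, revIcc] at this ⊢
  omega

theorem max_blockOf {a : ℕ} {t : List ℕ} (hrow : (a :: t).Pairwise (· < ·)) :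
    (blockOf n (a :: t)).max = (revIcc n a : WithBot ℕ) := by
  rw [blockOf, List.toFinset_cons, Finset.image_insert, Finset.max_insert]
  refine max_eq_left (Finset.max_le fun y hy => ?_)
  obtain ⟨b, hb, rfl⟩ := Finset.mem_image.1 hy
  have hab := List.rel_of_pairwise_cons hrow (List.mem_toFinset.1 hb)
  exact WithBot.coe_le_coe.2 (by simp only [revIcc]; omega)

end RowsAndBlocks

structure IsOrderedSetPartition (n : ℕ) (L : List (Finset ℕ)) : Prop where
  nonempty : ∀ B ∈ L, B.Nonempty
  disjoint : L.Pairwise Disjoint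
  mem_Icc_iff : ∀ x, x ∈ Finset.Icc 1 n ↔ ∃ B ∈ L, x ∈ B
  max_lt : L.Pairwise (fun B C => C.max < B.max)

section OrderedSetPartition

variable {n : ℕ} {L : List (Finset ℕ)} {π : Finset (Finset ℕ)}

theorem IsOrderedSetPartition.subset_Icc (hL : IsOrderedSetPartition n L) {B : Finset ℕ}
    (hB : B ∈ L) : B ⊆ Finset.Icc 1 n :=
  fun x hx => (hL.mem_Icc_iff x).2 ⟨B, hB, hx⟩

theorem IsOrderedSetPartition.isSetPartitionOn_toFinset (hL : IsOrderedSetPartition n L) :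
    IsSetPartitionOn n L.toFinset := by
  refine ⟨fun B hB => hL.nonempty B (List.mem_toFinset.1 hB),
    fun B hB C hC => hL.disjoint.forall (List.mem_toFinset.1 hB) (List.mem_toFinset.1 hC),
    fun x => ?_⟩
  simp only [List.mem_toFinset]
  exact hL.mem_Icc_iff x

theorem IsSetPartitionOn.isOrderedSetPartition_blocksByMax (hπ : IsSetPartitionOn n π) :
    IsOrderedSetPartition n (blocksByMax π) where
  nonempty B hB := hπ.1 B (mem_blocksByMax.1 hB)
  disjoint := (nodup_blocksByMax π).imp_of_mem fun hB hC =>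
    hπ.2.1 _ (mem_blocksByMax.1 hB) _ (mem_blocksByMax.1 hC)
  mem_Icc_iff x := by simp only [mem_blocksByMax]; exact hπ.2.2 x
  max_lt := pairwise_blocksByMax_max_lt hπ.injOn_max

theorem IsOrderedSetPartition.mem_flatten_map_rowOf (hL : IsOrderedSetPartition n L) {x : ℕ} :
    x ∈ (L.map (rowOf n)).flatten ↔ x ∈ Finset.Icc 1 n := by
  simp only [List.mem_flatten, List.mem_map, exists_exists_and_eq_and]
  constructor
  · rintro ⟨B, hB, hx⟩
    rw [rowOf, Finset.mem_sort] at hx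
    exact image_revIcc_subset (hL.subset_Icc hB) hx
  · intro hx
    obtain ⟨B, hB, hxB⟩ := (hL.mem_Icc_iff _).1 (revIcc_mem hx)
    exact ⟨B, hB, (mem_rowOf hx).2 hxB⟩

theorem IsOrderedSetPartition.nodup_flatten_map_rowOf (hL : IsOrderedSetPartition n L) :
    (L.map (rowOf n)).flatten.Nodup := by
  refine List.nodup_flatten.2 ⟨?_, List.pairwise_map.2 (hL.disjoint.imp_of_mem ?_)⟩
  · simp only [List.mem_map]
    rintro _ ⟨B, -, rfl⟩
    exact Finset.sort_nodup _ _
  · intro B C hB hC hBC x hxB hxC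
    have hx := hL.mem_flatten_map_rowOf.1 (List.mem_flatten.2 ⟨_, List.mem_map_of_mem hB, hxB⟩)
    exact Finset.disjoint_left.1 hBC ((mem_rowOf hx).1 hxB) ((mem_rowOf hx).1 hxC)

theorem IsOrderedSetPartition.isSIT_map_rowOf (hL : IsOrderedSetPartition n L)
    (hn : (L.map Finset.card).sum = n) :
    IsSIT (L.map Finset.card) (L.map (rowOf n)) := by
  refine ⟨?_, ?_, ?_, ?_⟩
  · rw [List.map_map]
    exact List.map_congr_left fun B hB => length_rowOf (hL.subset_Icc hB)
  · rw [hn, List.perm_ext_iff_of_nodup hL.nodup_flatten_map_rowOf (nodup_map_succ_range n)]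
    exact fun x => hL.mem_flatten_map_rowOf.trans mem_map_succ_range.symm
  · simp only [List.mem_map]
    rintro _ ⟨B, -, rfl⟩
    exact (Finset.sortedLT_sort _).isChain
  · rw [List.map_map]
    refine List.Pairwise.isChain
      (List.pairwise_map.2 (hL.max_lt.imp_of_mem fun {B C} hB hC hlt => ?_))
    have hBn := hL.nonempty _ hB
    have hCn := hL.nonempty _ hC
    rw [← Finset.coe_max' hBn, ← Finset.coe_max' hCn, WithBot.coe_lt_coe] at hlt
    simp only [Function.comp, headD_rowOf hBn (hL.subset_Icc hB),
      headD_rowOf hCn (hL.subset_Icc hC)]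
    exact (revIcc_lt_revIcc (hL.subset_Icc hB (B.max'_mem hBn))
      (hL.subset_Icc hC (C.max'_mem hCn))).2 hlt

end OrderedSetPartition

namespace IsSIT

variable {I : List ℕ} {T : List (List ℕ)} {row : List ℕ}

theorem mem_flatten_iff (hT : IsSIT I T) {x : ℕ} :
    x ∈ T.flatten ↔ x ∈ Finset.Icc 1 I.sum := by
  rw [hT.2.1.mem_iff, mem_map_succ_range]

theorem subset_Icc (hT : IsSIT I T) (hrow : row ∈ T) : row.toFinset ⊆ Finset.Icc 1 I.sum :=
  fun _ hx => hT.mem_flatten_iff.1 (List.mem_flatten.2 ⟨row, hrow, List.mem_toFinset.1 hx⟩)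

theorem pairwise_lt (hT : IsSIT I T) (hrow : row ∈ T) : row.Pairwise (· < ·) :=
  List.isChain_iff_pairwise.1 (hT.2.2.1 row hrow)

theorem ne_nil (hT : IsSIT I T) (hI : ∀ i ∈ I, 0 < i) (hrow : row ∈ T) : row ≠ [] := by
  rintro rfl
  exact lt_irrefl 0 (hI _ (hT.1 ▸ List.mem_map_of_mem hrow))

theorem isOrderedSetPartition_map_blockOf (hT : IsSIT I T) (hI : ∀ i ∈ I, 0 < i) :
    IsOrderedSetPartition I.sum (T.map (blockOf I.sum)) where
  nonempty := by
    simp only [List.mem_map]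
    rintro _ ⟨row, hrow, rfl⟩
    exact ((List.toFinset_nonempty_iff row).2 (hT.ne_nil hI hrow)).image _
  disjoint := by
    have hnodup : T.flatten.Nodup := hT.2.1.nodup_iff.2 (nodup_map_succ_range _)
    refine List.pairwise_map.2 ((List.nodup_flatten.1 hnodup).2.imp_of_mem fun hr hs hrs => ?_)
    refine Finset.disjoint_left.2 fun x hxr hxs => ?_
    have hx := image_revIcc_subset (hT.subset_Icc hr) hxr
    exact hrs ((mem_blockOf hx).1 hxr) ((mem_blockOf hx).1 hxs)
  mem_Icc_iff x := by
    simp only [List.mem_map, exists_exists_and_eq_and]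
    refine ⟨fun hx => ?_, fun ⟨row, hrow, hx⟩ =>
      image_revIcc_subset (hT.subset_Icc hrow) hx⟩
    obtain ⟨row, hrow, hxrow⟩ := List.mem_flatten.1 (hT.mem_flatten_iff.2 (revIcc_mem hx))
    exact ⟨row, hrow, (mem_blockOf hx).2 hxrow⟩
  max_lt := by
    have hheads := List.isChain_iff_pairwise.1 hT.2.2.2
    refine List.pairwise_map.2 ((List.pairwise_map.1 hheads).imp_of_mem fun {r s} hr hs hlt => ?_)
    obtain ⟨a, t, rfl⟩ := List.exists_cons_of_ne_nil (hT.ne_nil hI hr)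
    obtain ⟨b, u, rfl⟩ := List.exists_cons_of_ne_nil (hT.ne_nil hI hs)
    rw [max_blockOf (hT.pairwise_lt hr), max_blockOf (hT.pairwise_lt hs)]
    exact WithBot.coe_lt_coe.2 <|
      (revIcc_lt_revIcc (hT.subset_Icc hs (by simp)) (hT.subset_Icc hr (by simp))).2 hlt

theorem map_rowOf_map_blockOf (hT : IsSIT I T) :
    (T.map (blockOf I.sum)).map (rowOf I.sum) = T := by
  rw [List.map_map]
  exact (List.map_congr_left fun row hrow =>
    rowOf_blockOf (hT.pairwise_lt hrow) (hT.subset_Icc hrow)).trans (List.map_id T)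

theorem map_card_map_blockOf (hT : IsSIT I T) :
    (T.map (blockOf I.sum)).map Finset.card = I := by
  rw [List.map_map]
  refine (List.map_congr_left fun row hrow => ?_).trans hT.1
  exact card_blockOf (hT.pairwise_lt hrow).nodup (hT.subset_Icc hrow)

end IsSIT

section Positions

variable {α : Type*} {M : List (List α)} {l : List α} {x y : α} {j k : ℕ}

theorem length_flatten_take_add_le (hjk : j < k) (hk : k < M.length) :
    (M.take j).flatten.length + M[j].length ≤ (M.take k).flatten.length := by
  rw [← List.length_append, ← List.flatten_concat, ← List.take_succ_eq_append_getElem]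
  exact (List.take_prefix_take_left hjk).flatten.length_le

theorem idxOf_flatten [DecidableEq α] (hM : M.flatten.Nodup) (hj : j < M.length)
    (hx : x ∈ M[j]) :
    M.flatten.idxOf x = (M.take j).flatten.length + M[j].idxOf x := by
  have hsplit : M.flatten = (M.take j).flatten ++ (M[j] ++ (M.drop (j + 1)).flatten) := by
    rw [← List.flatten_cons, ← List.drop_eq_getElem_cons hj, ← List.flatten_append,
      List.take_append_drop]
  have hxP : x ∉ (M.take j).flatten := fun h =>
    (List.nodup_append.1 (hsplit ▸ hM)).2.2 x h x (List.mem_append_left _ hx) rfl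
  rw [hsplit, List.idxOf_append_of_notMem hxP, List.idxOf_append_of_mem hx]

variable [LinearOrder α]

theorem idxOf_lt_idxOf_of_sortedLT (hl : l.SortedLT) (hx : x ∈ l) (hy : y ∈ l) (hxy : x < y) :
    l.idxOf x < l.idxOf y := by
  by_contra! h
  have := hl.strictMono_get.monotone (a := ⟨_, List.idxOf_lt_length_iff.2 hy⟩)
    (b := ⟨_, List.idxOf_lt_length_iff.2 hx⟩) h
  simp only [List.get_eq_getElem, List.getElem_idxOf] at this
  exact absurd hxy (not_lt.2 this)

theorem idxOf_flatten_lt_iff (hM : M.flatten.Nodup) (hrows : ∀ r ∈ M, r.SortedLT)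
    (hj : j < M.length) (hk : k < M.length) (hx : x ∈ M[j]) (hy : y ∈ M[k]) (hxy : x < y) :
    M.flatten.idxOf y < M.flatten.idxOf x ↔ k < j := by
  rw [idxOf_flatten hM hj hx, idxOf_flatten hM hk hy]
  have hxj := List.idxOf_lt_length_iff.2 hx
  have hyk := List.idxOf_lt_length_iff.2 hy
  rcases lt_trichotomy j k with hjk | rfl | hkj
  · have := length_flatten_take_add_le hjk hk
    omega
  · have := idxOf_lt_idxOf_of_sortedLT (hrows _ (List.getElem_mem hj)) hx hy hxy
    omega
  · have := length_flatten_take_add_le hkj hj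
    omega

end Positions

def gaps (l : List ℕ) : List ℕ := List.zipWith (fun a b => a - b) l.tail l

theorem compOfSet_eq_gaps (n : ℕ) (S : Finset ℕ) :
    compOfSet n S = gaps (0 :: (S.sort (· ≤ ·) ++ [n])) := rfl

theorem gaps_reverse_map_sub {n : ℕ} {l : List ℕ} (hl : l.Pairwise (· ≤ ·))
    (hn : ∀ x ∈ l, x ≤ n) :
    gaps (l.map (n - ·)).reverse = (gaps l).reverse := by
  refine List.ext_getElem (by simp [gaps]) fun i h₁ h₂ => ?_
  simp only [gaps, List.length_zipWith, List.length_tail, List.length_reverse,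
    List.length_map] at h₁
  simp only [gaps, List.getElem_zipWith, List.getElem_tail, List.getElem_reverse, List.getElem_map,
    List.length_zipWith, List.length_tail, List.length_map]
  have e₁ : min (l.length - 1) l.length - 1 - i = l.length - 1 - (i + 1) := by omega
  have e₂ : l.length - 1 - (i + 1) + 1 = l.length - 1 - i := by omega
  simp only [e₁, e₂]
  have hle := List.pairwise_iff_getElem.1 hl (l.length - 1 - (i + 1)) (l.length - 1 - i)
    (by omega) (by omega) (by omega)
  have hbound := hn _ (List.getElem_mem (l := l) (n := l.length - 1 - i) (by omega))
  omega

theorem sort_image_sub {n : ℕ} {S : Finset ℕ} (hS : ∀ x ∈ S, x ≤ n) :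
    (S.image (n - ·)).sort (· ≤ ·) = ((S.sort (· ≤ ·)).map (n - ·)).reverse := by
  have hnodup : ((S.sort (· ≤ ·)).map (n - ·)).reverse.Nodup := by
    refine List.nodup_reverse.2 ((S.sort_nodup _).map_on fun x hx y hy hxy => ?_)
    have := hS x ((S.mem_sort _).1 hx)
    have := hS y ((S.mem_sort _).1 hy)
    omega
  have htoFinset : ((S.sort (· ≤ ·)).map (n - ·)).reverse.toFinset = S.image (n - ·) := by
    ext
    simp
  rw [← htoFinset, List.toFinset_sort _ hnodup]
  exact List.pairwise_reverse.2 (List.pairwise_map.2 (S.sortedLT_sort.pairwise.imp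
    fun h => by omega))

theorem compOfSet_image_sub {n : ℕ} {S : Finset ℕ} (hS : ∀ x ∈ S, x ≤ n) :
    compOfSet n (S.image (n - ·)) = (compOfSet n S).reverse := by
  have hlist : 0 :: ((S.image (n - ·)).sort (· ≤ ·) ++ [n]) =
      ((0 :: (S.sort (· ≤ ·) ++ [n])).map (n - ·)).reverse := by
    simp [sort_image_sub hS]
  rw [compOfSet_eq_gaps, compOfSet_eq_gaps, hlist, gaps_reverse_map_sub]
  · refine List.pairwise_cons.2 ⟨fun _ _ => Nat.zero_le _, List.pairwise_append.2
      ⟨S.sortedLT_sort.pairwise.imp le_of_lt, List.pairwise_singleton _ _,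
        fun a ha b hb => ?_⟩⟩
    rw [List.mem_singleton] at hb
    exact hb ▸ hS a ((S.mem_sort _).1 ha)
  · simp only [List.mem_cons, List.mem_append, Finset.mem_sort, List.not_mem_nil, or_false]
    rintro x (rfl | hx | rfl)
    exacts [Nat.zero_le n, hS x hx, le_rfl]

section DescentSets

variable {n : ℕ} {L : List (Finset ℕ)}

def blockIdx (L : List (Finset ℕ)) (x : ℕ) : ℕ := L.findIdx fun B => decide (x ∈ B)

theorem blockIdx_spec {x : ℕ} (h : ∃ B ∈ L, x ∈ B) :
    ∃ hlt : blockIdx L x < L.length, x ∈ L[blockIdx L x] := by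
  have hlt : blockIdx L x < L.length := List.findIdx_lt_length_of_exists (by simpa using h)
  exact ⟨hlt, of_decide_eq_true (List.findIdx_getElem (w := hlt))⟩

theorem idxOf_flatten_map_sort_lt_iff (hL : L.Pairwise Disjoint) {x y : ℕ}
    (hx : ∃ B ∈ L, x ∈ B) (hy : ∃ B ∈ L, y ∈ B) (hxy : x < y) :
    (L.map (·.sort (· ≤ ·))).flatten.idxOf y <
        (L.map (·.sort (· ≤ ·))).flatten.idxOf x ↔ blockIdx L y < blockIdx L x := by
  have hnodup : (L.map (·.sort (· ≤ ·))).flatten.Nodup := by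
    refine List.nodup_flatten.2 ⟨?_, List.pairwise_map.2 (hL.imp fun hBC z hzB hzC => ?_)⟩
    · simp only [List.mem_map]
      rintro _ ⟨B, -, rfl⟩
      exact B.sort_nodup _
    · exact Finset.disjoint_left.1 hBC ((Finset.mem_sort _).1 hzB) ((Finset.mem_sort _).1 hzC)
  have hrows : ∀ r ∈ L.map (·.sort (· ≤ ·)), r.SortedLT := by
    simp only [List.mem_map]
    rintro _ ⟨B, -, rfl⟩
    exact B.sortedLT_sort
  obtain ⟨hxL, hxB⟩ := blockIdx_spec hx
  obtain ⟨hyL, hyB⟩ := blockIdx_spec hy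
  exact idxOf_flatten_lt_iff hnodup hrows (by simpa using hxL) (by simpa using hyL)
    (by simpa using hxB) (by simpa using hyB) hxy

theorem desSet_invWord (w : List ℕ) :
    desSet (invWord w) =
      (Finset.range w.length).filter fun i => 0 < i ∧ w.idxOf (i + 1) < w.idxOf i := by
  have hlen : (invWord w).length = w.length := by simp [invWord]
  rw [desSet, hlen]
  refine Finset.filter_congr fun i hi => and_congr_right fun hi0 => ?_
  rw [Finset.mem_range] at hi
  rw [List.getD_eq_getElem _ _ (by omega), List.getD_eq_getElem _ _ (by omega)]
  simp only [invWord, List.getElem_map, List.getElem_range, Nat.sub_add_cancel hi0]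
  omega

theorem tabDesSet_map_rowOf (L : List (Finset ℕ)) :
    tabDesSet n (L.map (rowOf n)) =
      ((Finset.range n).filter fun i => 0 < i ∧ blockIdx L (i + 1) < blockIdx L i).image
        (n - ·) := by
  have hfind : ∀ x, 1 ≤ x → x ≤ n →
      (L.map (rowOf n)).findIdx (fun row => decide (x ∈ row)) = blockIdx L (revIcc n x) := by
    intro x h₁ h₂
    have hx : x ∈ Finset.Icc 1 n := Finset.mem_Icc.2 ⟨h₁, h₂⟩
    rw [List.findIdx_map, blockIdx]
    congr 1
    funext B
    simp [mem_rowOf hx]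
  ext x
  simp only [tabDesSet, Finset.mem_filter, Finset.mem_range, Finset.mem_image]
  constructor
  · rintro ⟨hxn, hx0, hlt⟩
    rw [hfind x (by omega) (by omega), hfind (x + 1) (by omega) (by omega)] at hlt
    refine ⟨n - x, ⟨by omega, by omega, ?_⟩, by omega⟩
    simpa only [revIcc, show n + 1 - x = n - x + 1 by omega, show n + 1 - (x + 1) = n - x by omega]
      using hlt
  · rintro ⟨i, ⟨hin, hi0, hlt⟩, rfl⟩
    refine ⟨by omega, by omega, ?_⟩
    rw [hfind (n - i) (by omega) (by omega), hfind (n - i + 1) (by omega) (by omega)]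
    simpa only [revIcc, show n + 1 - (n - i) = i + 1 by omega,
      show n + 1 - (n - i + 1) = i by omega] using hlt

theorem IsOrderedSetPartition.compOfSet_tabDesSet_map_rowOf (hL : IsOrderedSetPartition n L)
    (hn : (L.map Finset.card).sum = n) :
    compOfSet n (tabDesSet n (L.map (rowOf n))) =
      (compOfSet n (desSet (invWord (L.map (·.sort (· ≤ ·))).flatten))).reverse := by
  have hlen : (L.map (·.sort (· ≤ ·))).flatten.length = n := by
    simp [List.length_flatten, Function.comp_def, ← hn]
  have hdes : desSet (invWord (L.map (·.sort (· ≤ ·))).flatten) =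
      (Finset.range n).filter fun i => 0 < i ∧ blockIdx L (i + 1) < blockIdx L i := by
    rw [desSet_invWord, hlen]
    refine Finset.filter_congr fun i hi => and_congr_right fun hi0 => ?_
    rw [Finset.mem_range] at hi
    have hcov : ∀ x, 1 ≤ x → x ≤ n → ∃ B ∈ L, x ∈ B := fun x h₁ h₂ =>
      (hL.mem_Icc_iff x).1 (Finset.mem_Icc.2 ⟨h₁, h₂⟩)
    exact idxOf_flatten_map_sort_lt_iff hL.disjoint (hcov i (by omega) (by omega))
      (hcov (i + 1) (by omega) (by omega)) (Nat.lt_succ_self i)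
  rw [tabDesSet_map_rowOf, hdes, compOfSet_image_sub]
  intro i hi
  exact (Finset.mem_range.1 (Finset.mem_filter.1 hi).1).le

end DescentSets

noncomputable def tableauOf (n : ℕ) (π : Finset (Finset ℕ)) : List (List ℕ) :=
  (blocksByMax π).map (rowOf n)

def partitionOf (n : ℕ) (T : List (List ℕ)) : Finset (Finset ℕ) :=
  (T.map (blockOf n)).toFinset

section Correspondence

variable {n : ℕ} {I : List ℕ} {T : List (List ℕ)} {π : Finset (Finset ℕ)}

theorem IsSIT.blocksByMax_partitionOf (hT : IsSIT I T) (hI : ∀ i ∈ I, 0 < i) :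
    blocksByMax (partitionOf I.sum T) = T.map (blockOf I.sum) :=
  blocksByMax_toFinset (hT.isOrderedSetPartition_map_blockOf hI).max_lt

theorem IsSIT.isSetPartitionOn_partitionOf (hT : IsSIT I T) (hI : ∀ i ∈ I, 0 < i) :
    IsSetPartitionOn I.sum (partitionOf I.sum T) :=
  (hT.isOrderedSetPartition_map_blockOf hI).isSetPartitionOn_toFinset

theorem IsSIT.kcomp_partitionOf (hT : IsSIT I T) (hI : ∀ i ∈ I, 0 < i) :
    Kcomp (partitionOf I.sum T) = I := by
  rw [Kcomp, hT.blocksByMax_partitionOf hI, hT.map_card_map_blockOf]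

theorem IsSIT.tableauOf_partitionOf (hT : IsSIT I T) (hI : ∀ i ∈ I, 0 < i) :
    tableauOf I.sum (partitionOf I.sum T) = T := by
  rw [tableauOf, hT.blocksByMax_partitionOf hI, hT.map_rowOf_map_blockOf]

theorem IsSetPartitionOn.partitionOf_tableauOf (hπ : IsSetPartitionOn n π) :
    partitionOf n (tableauOf n π) = π := by
  have hL := hπ.isOrderedSetPartition_blocksByMax
  ext B
  rw [partitionOf, tableauOf, List.map_map,
    List.map_congr_left (f := blockOf n ∘ rowOf n) (g := id) fun C hC =>
    blockOf_rowOf (hL.subset_Icc hC), List.map_id, List.mem_toFinset, mem_blocksByMax]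

theorem IsSetPartitionOn.isSIT_tableauOf (hπ : IsSetPartitionOn I.sum π) (hK : Kcomp π = I) :
    IsSIT I (tableauOf I.sum π) :=
  hK ▸ hπ.isOrderedSetPartition_blocksByMax.isSIT_map_rowOf (congrArg List.sum hK)

theorem IsSetPartitionOn.compOfSet_tabDesSet_tableauOf (hπ : IsSetPartitionOn n π)
    (hn : (Kcomp π).sum = n) :
    compOfSet n (tabDesSet n (tableauOf n π)) =
      (compOfSet n (desSet (invWord (hatWord π)))).reverse :=
  hπ.isOrderedSetPartition_blocksByMax.compOfSet_tabDesSet_map_rowOf hn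

end Correspondence

/-- The multiset of descent compositions `D(T)` over standard immaculate tableaux of
shape `I` equals the multiset of mirror images of `C(π̂⁻¹)` over set partitions `π`
of `{1,…,n}` with `K(π) = I` (stated as an equality of counts for each composition). -/
theorem tabDes_multiset_eq (I : List ℕ) (hI : ∀ i ∈ I, 0 < i) (J : List ℕ) :
    Nat.card {T : List (List ℕ) //
        IsSIT I T ∧ compOfSet I.sum (tabDesSet I.sum T) = J}
    = Nat.card {π : Finset (Finset ℕ) //
        IsSetPartitionOn I.sum π ∧ Kcomp π = I ∧
        (compOfSet I.sum (desSet (invWord (hatWord π)))).reverse = J} := by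
  refine Nat.card_congr
    { toFun := fun T => ⟨partitionOf I.sum T, ?_⟩
      invFun := fun π => ⟨tableauOf I.sum π, ?_⟩
      left_inv := fun T => Subtype.ext (T.2.1.tableauOf_partitionOf hI)
      right_inv := fun π => Subtype.ext π.2.1.partitionOf_tableauOf }
  · obtain ⟨hT, hJ⟩ := T.2
    have hπ := hT.isSetPartitionOn_partitionOf hI
    have hK := hT.kcomp_partitionOf hI
    refine ⟨hπ, hK, ?_⟩
    rw [← hπ.compOfSet_tabDesSet_tableauOf (by rw [hK]), hT.tableauOf_partitionOf hI, hJ]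
  · obtain ⟨hπ, hK, hJ⟩ := π.2
    exact ⟨hπ.isSIT_tableauOf hK, by rw [hπ.compOfSet_tabDesSet_tableauOf (by rw [hK]), hJ]⟩
end

section
/- Let u and v be nonempty words over a totally ordered alphabet, of respective lengths k and ℓ, such that no letter occurs in both u and v. Then the multiset of descent compositions of the words occurring in u ≺′ v equals the multiset of descent compositions of the words occurring in σ ≺′ τ, where: if u_1 < v_1 then σ = std(u) and τ = std(v)[k], and if u_1 > v_1 then σ = std(u)[ℓ] and τ = std(v). Here w[m] denotes the word obtained from w by adding m to every letter. -/
/-- The shuffle product of two words, as a multiset of words. -/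
def sh {α : Type*} : List α → List α → Multiset (List α)
  | [], v => {v}
  | u, [] => {u}
  | a :: u, b :: v => ((sh u (b :: v)).map (a :: ·)) + ((sh (a :: u) v).map (b :: ·))
termination_by u v => u.length + v.length
decreasing_by all_goals (simp [List.length_cons]; try omega)

/-- The left half-shuffle `u ≺′ v = a(u' ⧢ v)` for `u = a·u'`, as a multiset of words
(`0` if `u` is empty). -/
def hsL {α : Type*} : List α → List α → Multiset (List α)
  | [], _ => 0
  | a :: u', v => (sh u' v).map (a :: ·)

/-- The descent composition of a word. -/
def descComp (w : List ℕ) : List ℕ := compOfSet w.length (desSet w)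

/-- The standardization of a word `w`: position `p` receives rank
`1 + #{q : w_q < w_p, or w_q = w_p and q < p}`. -/
def stdW (w : List ℕ) : List ℕ :=
  (List.range w.length).map (fun p =>
    1 + ((List.range w.length).filter (fun q =>
      decide (w.getD q 0 < w.getD p 0 ∨ (w.getD q 0 = w.getD p 0 ∧ q < p)))).length)

/-!
By Möbius inversion on the lattice of finite sets, the multiset of descent sets of the words of
`u ≺′ v` is determined by the numbers of those words whose descent set lies in a given set `S`.
Such a word `a·w` is weakly increasing on each block of positions delimited by `S`. As `u` and
`v` have disjoint alphabets, a block taking the next `s` letters of `u` and the next `t` letters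
of `v` can be weakly increasing in exactly one way, and this happens iff both pieces are weakly
increasing; only for the first block does one also need `a ≤ v₁`. Hence the count depends only
on the descent sets of `u` and `v` and on whether `u₁ < v₁`, and standardizing or shifting a
word preserves its descent set.
-/

open List
open Finset.HasAntidiagonal (antidiagonal mem_antidiagonal)

section Shuffle
variable {α : Type*}

@[simp] lemma sh_nil_left (v : List α) : sh [] v = {v} := by rw [sh]

@[simp] lemma sh_nil_right (u : List α) : sh u [] = {u} := by
  cases u <;> simp [sh]

lemma sh_cons_cons (a b : α) (u v : List α) :
    sh (a :: u) (b :: v) = (sh u (b :: v)).map (a :: ·) + (sh (a :: u) v).map (b :: ·) := by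
  rw [sh]

lemma length_of_mem_sh {u v w : List α} (hw : w ∈ sh u v) :
    w.length = u.length + v.length := by
  induction u, v using sh.induct generalizing w with
  | case1 v => simp_all
  | case2 u hu => simp_all
  | case3 a u b v ihu ihv =>
    rw [sh_cons_cons] at hw
    simp only [Multiset.mem_add, Multiset.mem_map] at hw
    rcases hw with ⟨w, hw, rfl⟩ | ⟨w, hw, rfl⟩
    · simp only [length_cons, ihu hw]; omega
    · simp only [length_cons, ihv hw]; omega

variable [LinearOrder α]

def sortedSplitRest (x : α) (u v : List α) (p : ℕ × ℕ) : Multiset (List α) :=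
  if p.1 ≤ u.length ∧ p.2 ≤ v.length ∧ IsChain (· ≤ ·) (x :: u.take p.1) ∧
      IsChain (· ≤ ·) (x :: v.take p.2) then sh (u.drop p.1) (v.drop p.2) else 0

lemma map_drop_filter_isChain_map_cons (x a : α) (j : ℕ) (s : Multiset (List α)) :
    ((s.map (a :: ·)).filter fun w => IsChain (· ≤ ·) (x :: w.take (j + 1))).map (drop (j + 1)) =
      if x ≤ a then (s.filter (fun w => IsChain (· ≤ ·) (a :: w.take j))).map (drop j)
      else 0 := by
  rw [Multiset.filter_map, Multiset.map_map]
  split_ifs with hxa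
  · congr 1
    exact Multiset.filter_congr fun w _ => by simp [hxa]
  · simp [Function.comp_def, hxa]

lemma map_drop_filter_sh_nil_left (x : α) (j : ℕ) {v : List α} (hj : j ≤ v.length) :
    ((sh [] v).filter (fun w => IsChain (· ≤ ·) (x :: w.take j))).map (drop j) =
      ∑ p ∈ antidiagonal j, sortedSplitRest x [] v p := by
  rw [Finset.sum_eq_single (0, j)]
  · simp [sortedSplitRest, hj, Multiset.filter_singleton, apply_ite]
  · rintro ⟨s, t⟩ hp hne
    have : s ≠ 0 := by rintro rfl; simp_all
    simp [sortedSplitRest, this]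
  · simp

lemma map_drop_filter_sh_nil_right (x : α) (j : ℕ) {u : List α} (hj : j ≤ u.length) :
    ((sh u []).filter (fun w => IsChain (· ≤ ·) (x :: w.take j))).map (drop j) =
      ∑ p ∈ antidiagonal j, sortedSplitRest x u [] p := by
  rw [Finset.sum_eq_single (j, 0)]
  · simp [sortedSplitRest, hj, Multiset.filter_singleton, apply_ite]
  · rintro ⟨s, t⟩ hp hne
    have : t ≠ 0 := by rintro rfl; simp_all
    simp [sortedSplitRest, this]
  · simp

lemma ite_le_sortedSplitRest_cons_left {x a b : α} (hab : a ≠ b) (u v : List α) (s t : ℕ) :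
    (if x ≤ a then sortedSplitRest a u (b :: v) (s, t) else 0) =
      if t = 0 ∨ a < b then sortedSplitRest x (a :: u) (b :: v) (s + 1, t) else 0 := by
  rcases t with _ | t
  · by_cases hxa : x ≤ a <;> simp [sortedSplitRest, hxa]
  · simp only [sortedSplitRest, take_succ_cons, isChain_cons_cons, length_cons,
      add_le_add_iff_right, drop_succ_cons]
    split_ifs <;> first | rfl | (exfalso; grind)

lemma ite_le_sortedSplitRest_cons_right {x a b : α} (hab : a ≠ b) (u v : List α) (s t : ℕ) :
    (if x ≤ b then sortedSplitRest b (a :: u) v (s, t) else 0) =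
      if s = 0 ∨ b < a then sortedSplitRest x (a :: u) (b :: v) (s, t + 1) else 0 := by
  rcases s with _ | s
  · by_cases hxb : x ≤ b <;> simp [sortedSplitRest, hxb]
  · simp only [sortedSplitRest, take_succ_cons, isChain_cons_cons, length_cons,
      add_le_add_iff_right, drop_succ_cons]
    split_ifs <;> first | rfl | (exfalso; grind)

theorem map_drop_filter_isChain_take_sh (x : α) (j : ℕ) {u v : List α}
    (huv : ∀ a ∈ u, a ∉ v) (hj : j ≤ u.length + v.length) :
    ((sh u v).filter (fun w => IsChain (· ≤ ·) (x :: w.take j))).map (drop j) =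
      ∑ p ∈ antidiagonal j, sortedSplitRest x u v p := by
  induction j generalizing x u v with
  | zero => simp [sortedSplitRest]
  | succ j ih =>
    match u, v with
    | [], v => exact map_drop_filter_sh_nil_left x _ (by simpa using hj)
    | a :: u, [] => exact map_drop_filter_sh_nil_right x _ (by simpa using hj)
    | a :: u, b :: v =>
      have hab : a ≠ b := fun h => huv a mem_cons_self (h ▸ mem_cons_self)
      -- a sorted block starts with `a` if it uses `u` and, when it also uses `v`, `a < b`
      have hsplit : ∀ p ∈ antidiagonal (j + 1), sortedSplitRest x (a :: u) (b :: v) p =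
          (if 0 < p.1 ∧ (p.2 = 0 ∨ a < b) then sortedSplitRest x (a :: u) (b :: v) p else 0) +
          (if 0 < p.2 ∧ (p.1 = 0 ∨ b < a) then sortedSplitRest x (a :: u) (b :: v) p else 0) := by
        intro p hp
        rw [mem_antidiagonal] at hp
        rcases lt_or_gt_of_ne hab with h | h <;>
          simp only [h, not_lt_of_gt h, or_true, or_false, and_true] <;>
          split_ifs <;> first | omega | simp
      have hju : j ≤ u.length + (b :: v).length := by simp only [length_cons] at hj ⊢; omega
      have hjv : j ≤ (a :: u).length + v.length := by simp only [length_cons] at hj ⊢; omega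
      rw [sh_cons_cons, Multiset.filter_add, Multiset.map_add, map_drop_filter_isChain_map_cons,
        map_drop_filter_isChain_map_cons, ih a (fun c hc => huv c (mem_cons_of_mem a hc)) hju,
        ih b (fun c hc hcv => huv c hc (mem_cons_of_mem b hcv)) hjv,
        Finset.sum_congr rfl hsplit, Finset.sum_add_distrib, Finset.Nat.sum_antidiagonal_succ,
        Finset.Nat.sum_antidiagonal_succ']
      simp only [lt_irrefl, false_and, if_false, zero_add, Nat.zero_lt_succ, true_and,
        ← ite_le_sortedSplitRest_cons_left hab, ← ite_le_sortedSplitRest_cons_right hab,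
        Finset.sum_ite_irrel, Finset.sum_const_zero]

end Shuffle

namespace List
variable {α : Type*} [LinearOrder α]

/-- `Forall₂ (· ≤ ·) (descents w) e` says that the descents of `w` lie among the positions
marked `true` in `e`. -/
def descents : List α → List Bool
  | a :: b :: l => decide (b < a) :: descents (b :: l)
  | _ => []

@[simp] lemma descents_nil : descents ([] : List α) = [] := rfl

@[simp] lemma descents_singleton (a : α) : descents [a] = [] := rfl

@[simp] lemma descents_cons_cons (a b : α) (l : List α) :
    descents (a :: b :: l) = decide (b < a) :: descents (b :: l) := rfl

@[simp] lemma length_descents : ∀ l : List α, (descents l).length = l.length - 1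
  | [] | [_] => rfl
  | a :: b :: l => by simp [length_descents (b :: l)]

lemma length_eq_of_descents_cons_eq {x x' : α} {u u' : List α}
    (h : descents (x :: u) = descents (x' :: u')) : u.length = u'.length := by
  simpa using congrArg length h

lemma descents_take : ∀ (n : ℕ) (l : List α), descents (l.take (n + 1)) = (descents l).take n
  | _, [] | _, [_] => by simp
  | 0, _ :: _ :: _ => by simp
  | n + 1, a :: b :: l => by
    simpa [take_succ_cons] using descents_take n (b :: l)

lemma descents_drop : ∀ (n : ℕ) (l : List α), descents (l.drop n) = (descents l).drop n
  | 0, _ => rfl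
  | _ + 1, [] | _ + 1, [_] => by simp
  | n + 1, a :: b :: l => by simpa using descents_drop n (b :: l)

lemma isChain_le_iff_true_notMem_descents : ∀ {l : List α},
    IsChain (· ≤ ·) l ↔ true ∉ descents l
  | [] | [_] => by simp
  | a :: b :: l => by
    simp [isChain_cons_cons, isChain_le_iff_true_notMem_descents (l := b :: l)]

lemma getElem_descents : ∀ {l : List α} {i : ℕ} (hi : i < (descents l).length),
    (descents l)[i] = decide (l[i + 1]'(by rw [length_descents] at hi; omega) <
      l[i]'(by rw [length_descents] at hi; omega))
  | [], _, hi | [_], _, hi => by simp at hi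
  | _ :: _ :: _, 0, _ => rfl
  | _ :: b :: l, i + 1, hi => getElem_descents (l := b :: l) (by simpa using hi)

lemma descents_map_of_strictMono {β : Type*} [LinearOrder β] {f : α → β} (hf : StrictMono f) :
    ∀ l : List α, descents (l.map f) = descents l
  | [] | [_] => rfl
  | a :: b :: l => by
    rw [map_cons, map_cons, descents_cons_cons, ← map_cons,
      descents_map_of_strictMono hf (b :: l)]
    simp [hf.lt_iff_lt]

lemma forall₂_descents_cons_replicate_append {x : α} (y : α) {w : List α} {j : ℕ}
    {rest : List Bool} (hj : j ≤ w.length) (hrest : rest.head? ≠ some false) :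
    Forall₂ (· ≤ ·) (descents (x :: w)) (replicate j false ++ rest) ↔
      IsChain (· ≤ ·) (x :: w.take j) ∧ Forall₂ (· ≤ ·) (descents (y :: w.drop j)) rest := by
  induction j generalizing x w with
  | zero =>
    rcases w with _ | ⟨z, w⟩
    · simp
    · rcases rest with _ | ⟨_ | _, rest⟩ <;> simp_all
  | succ j ih =>
    obtain ⟨z, w, rfl⟩ := exists_cons_of_length_pos (by omega : 0 < w.length)
    rw [replicate_succ, cons_append, descents_cons_cons, forall₂_cons, ih (by simpa using hj),
      take_succ_cons, drop_succ_cons, isChain_cons_cons, and_assoc]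
    exact and_congr_left' (by simp [Bool.le_iff_imp])

lemma exists_eq_replicate_false_append :
    ∀ e : List Bool, ∃ j rest, e = replicate j false ++ rest ∧ rest.head? ≠ some false
  | [] => ⟨0, [], rfl, by simp⟩
  | true :: e => ⟨0, true :: e, rfl, by simp⟩
  | false :: e => by
    obtain ⟨j, rest, rfl, h⟩ := exists_eq_replicate_false_append e
    exact ⟨j + 1, rest, rfl, h⟩

lemma isChain_cons_take_congr {x x' : α} {u u' : List α}
    (h : descents (x :: u) = descents (x' :: u')) (s : ℕ) :
    IsChain (· ≤ ·) (x :: u.take s) ↔ IsChain (· ≤ ·) (x' :: u'.take s) := by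
  simp only [← take_succ_cons, isChain_le_iff_true_notMem_descents, descents_take, h]

section OrderBot
variable [OrderBot α]

lemma descents_bot_cons_drop_congr {x x' : α} {u u' : List α}
    (h : descents (x :: u) = descents (x' :: u')) (n : ℕ) :
    descents (⊥ :: u.drop n) = descents (⊥ :: u'.drop n) := by
  have hlen : (u.drop n).length = (u'.drop n).length := by
    simp [length_eq_of_descents_cons_eq h]
  have hdrop : descents (u.drop n) = descents (u'.drop n) := by
    simpa [← descents_drop] using congrArg (drop (n + 1)) h
  generalize u.drop n = l, u'.drop n = l' at hlen hdrop
  rcases l with _ | ⟨a, l⟩ <;> rcases l' with _ | ⟨a', l'⟩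
  · rfl
  all_goals simp_all

lemma forall₂_descents_cons_true_cons (x : α) (w : List α) (e : List Bool) :
    Forall₂ (· ≤ ·) (descents (x :: w)) (true :: e) ↔
      Forall₂ (· ≤ ·) (descents (⊥ :: w)) (false :: e) := by
  rcases w with _ | ⟨a, w⟩ <;> simp

end OrderBot

end List

section Counting
variable {α : Type*} [LinearOrder α]

theorem countP_sh_forall₂_descents_replicate_append (x y : α) {u v : List α}
    (huv : ∀ a ∈ u, a ∉ v) {j : ℕ} {rest : List Bool} (hj : j ≤ u.length + v.length)
    (hrest : rest.head? ≠ some false) :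
    (sh u v).countP (fun w => Forall₂ (· ≤ ·) (descents (x :: w)) (replicate j false ++ rest)) =
      ∑ p ∈ antidiagonal j,
        (sortedSplitRest x u v p).countP (fun w => Forall₂ (· ≤ ·) (descents (y :: w)) rest) := by
  calc _ = (sh u v).countP (fun w => IsChain (· ≤ ·) (x :: w.take j) ∧
          Forall₂ (· ≤ ·) (descents (y :: w.drop j)) rest) :=
        Multiset.countP_congr rfl fun w hw => propext <|
          forall₂_descents_cons_replicate_append y (by rw [length_of_mem_sh hw]; exact hj) hrest
    _ = (((sh u v).filter fun w => IsChain (· ≤ ·) (x :: w.take j)).map (drop j)).countP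
          (fun w => Forall₂ (· ≤ ·) (descents (y :: w)) rest) := by
        rw [Multiset.countP_map, Multiset.filter_filter, Multiset.countP_eq_card_filter]
        simp only [and_comm]
    _ = _ := by
        rw [map_drop_filter_isChain_take_sh x j huv hj]
        exact map_sum (Multiset.countPAddMonoidHom _) _ _

lemma countP_sh_forall₂_descents_eq_zero (x : α) {u v : List α} {e : List Bool}
    (h : u.length + v.length ≠ e.length) :
    (sh u v).countP (fun w => Forall₂ (· ≤ ·) (descents (x :: w)) e) = 0 :=
  Multiset.countP_eq_zero.2 fun w hw hf => h (by simpa [length_of_mem_sh hw] using hf.length_eq)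

section OrderBot
variable [OrderBot α]

theorem countP_sh_forall₂_descents_congr_of_head_ne_true (e : List Bool)
    (he : e.head? ≠ some true) {x x' : α} {u v u' v' : List α}
    (huv : ∀ a ∈ u, a ∉ v) (huv' : ∀ a ∈ u', a ∉ v')
    (hu : descents (x :: u) = descents (x' :: u')) (hv : descents (x :: v) = descents (x' :: v')) :
    (sh u v).countP (fun w => Forall₂ (· ≤ ·) (descents (x :: w)) e) =
      (sh u' v').countP (fun w => Forall₂ (· ≤ ·) (descents (x' :: w)) e) := by
  generalize hn : e.length = n
  induction n using Nat.strong_induction_on generalizing e x x' u v u' v' with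
  | _ n ih =>
  have hlu := length_eq_of_descents_cons_eq hu
  have hlv := length_eq_of_descents_cons_eq hv
  by_cases hlen : u.length + v.length = e.length
  swap
  · rw [countP_sh_forall₂_descents_eq_zero x hlen,
      countP_sh_forall₂_descents_eq_zero x' (by omega)]
  obtain ⟨j, rest, rfl, hrest⟩ := exists_eq_replicate_false_append e
  rcases j with _ | j
  · obtain rfl : rest = [] := by
      rcases rest with _ | ⟨_ | _, _⟩ <;> simp_all
    obtain ⟨rfl, rfl⟩ : u = [] ∧ v = [] := by simpa using hlen
    obtain ⟨rfl, rfl⟩ : u' = [] ∧ v' = [] := by simpa using And.intro hlu.symm hlv.symm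
    simp [Multiset.countP_eq_card_filter, Multiset.filter_singleton]
  have hj : j + 1 ≤ u.length + v.length := by
    simp only [length_append, length_replicate] at hlen; omega
  -- each remainder starts right after an allowed descent, so its bound is irrelevant:
  -- take `⊥` on both sides
  rw [countP_sh_forall₂_descents_replicate_append x ⊥ huv hj hrest,
    countP_sh_forall₂_descents_replicate_append x' ⊥ huv' (by omega) hrest]
  refine Finset.sum_congr rfl fun p _ => ?_
  simp only [sortedSplitRest, apply_ite (Multiset.countP _), Multiset.countP_zero]
  refine if_congr ?_ ?_ rfl
  · rw [hlu, hlv, isChain_cons_take_congr hu, isChain_cons_take_congr hv]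
  have hdu := descents_bot_cons_drop_congr hu p.1
  have hdv := descents_bot_cons_drop_congr hv p.2
  have hdisj : ∀ a ∈ u.drop p.1, a ∉ v.drop p.2 := fun a ha hav =>
    huv a (mem_of_mem_drop ha) (mem_of_mem_drop hav)
  have hdisj' : ∀ a ∈ u'.drop p.1, a ∉ v'.drop p.2 := fun a ha hav =>
    huv' a (mem_of_mem_drop ha) (mem_of_mem_drop hav)
  rcases rest with _ | ⟨b, e⟩
  · exact ih _ (by subst hn; simp) [] (by simp) hdisj hdisj' hdu hdv rfl
  · obtain rfl : b = true := by simpa using hrest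
    simp only [forall₂_descents_cons_true_cons ⊥]
    exact ih _ (by subst hn; simp) (false :: e) (by simp) hdisj hdisj' hdu hdv rfl

theorem countP_sh_forall₂_descents_congr (e : List Bool) {x x' : α} {u v u' v' : List α}
    (huv : ∀ a ∈ u, a ∉ v) (huv' : ∀ a ∈ u', a ∉ v')
    (hu : descents (x :: u) = descents (x' :: u')) (hv : descents (x :: v) = descents (x' :: v')) :
    (sh u v).countP (fun w => Forall₂ (· ≤ ·) (descents (x :: w)) e) =
      (sh u' v').countP (fun w => Forall₂ (· ≤ ·) (descents (x' :: w)) e) := by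
  rcases e with _ | ⟨_ | _, e⟩
  · exact countP_sh_forall₂_descents_congr_of_head_ne_true _ (by simp) huv huv' hu hv
  · exact countP_sh_forall₂_descents_congr_of_head_ne_true _ (by simp) huv huv' hu hv
  · simp only [forall₂_descents_cons_true_cons]
    simpa using countP_sh_forall₂_descents_congr_of_head_ne_true (false :: e) (by simp) huv huv'
      (descents_bot_cons_drop_congr hu 0) (descents_bot_cons_drop_congr hv 0)

end OrderBot

end Counting

theorem Multiset.eq_of_countP_le_eq {β : Type*} [PartialOrder β] [WellFoundedLT β]
    [DecidableEq β] [DecidableLE β] {A B : Multiset β}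
    (h : ∀ b, A.countP (· ≤ b) = B.countP (· ≤ b)) : A = B := by
  classical
  ext b
  induction b using WellFoundedLT.induction with
  | _ b ih =>
  have hlt : A.filter (· < b) = B.filter (· < b) := by
    ext c
    simp only [Multiset.count_filter]
    split_ifs with hc
    exacts [ih c hc, rfl]
  have hsplit (C : Multiset β) : C.countP (· ≤ b) = C.count b + (C.filter (· < b)).card := by
    rw [Multiset.count_eq_card_filter_eq, ← Multiset.card_add, Multiset.filter_add_filter,
      Multiset.countP_eq_card_filter, show C.filter (fun a => b = a ∧ a < b) = 0 from
      Multiset.filter_eq_nil.2 fun a _ h => h.2.ne h.1.symm, add_zero]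
    exact congrArg _ (Multiset.filter_congr fun a _ => by rw [le_iff_eq_or_lt, eq_comm])
  have := h b
  rw [hsplit, hsplit, hlt] at this
  omega

lemma desSet_subset_iff_forall₂_descents (w : List ℕ) (S : Finset ℕ) :
    desSet w ⊆ S ↔
      Forall₂ (· ≤ ·) (descents w) ((range (w.length - 1)).map fun i => decide (i + 1 ∈ S)) := by
  rw [forall₂_iff_get]
  simp only [length_descents, length_map, length_range, true_and, get_eq_getElem, getElem_map,
    getElem_range, getElem_descents, Bool.le_iff_imp, decide_eq_true_eq]
  constructor
  · intro h i h₁ _ hi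
    apply h
    simp only [desSet, Finset.mem_filter, Finset.mem_range]
    rw [getD_eq_getElem _ _ (by omega), getD_eq_getElem _ _ (by omega)]
    exact ⟨by omega, by omega, hi⟩
  · intro h i hi
    simp only [desSet, Finset.mem_filter, Finset.mem_range] at hi
    obtain ⟨hlt, hpos, hdes⟩ := hi
    obtain ⟨k, rfl⟩ : ∃ k, i = k + 1 := ⟨i - 1, by omega⟩
    rw [getD_eq_getElem _ _ hlt, getD_eq_getElem _ _ (by omega)] at hdes
    exact h k (by omega) (by omega) hdes

lemma length_of_mem_hsL {α : Type*} {a : α} {u v w : List α} (hw : w ∈ hsL (a :: u) v) :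
    w.length = u.length + v.length + 1 := by
  obtain ⟨w, hw', rfl⟩ := Multiset.mem_map.1 hw
  simp [length_of_mem_sh hw']

theorem map_desSet_hsL_congr {a a' : ℕ} {u v u' v' : List ℕ}
    (huv : ∀ c ∈ u, c ∉ v) (huv' : ∀ c ∈ u', c ∉ v')
    (hu : descents (a :: u) = descents (a' :: u')) (hv : descents (a :: v) = descents (a' :: v')) :
    (hsL (a :: u) v).map desSet = (hsL (a' :: u') v').map desSet := by
  refine Multiset.eq_of_countP_le_eq fun S => ?_
  have hcount (a : ℕ) (u v : List ℕ) : ((hsL (a :: u) v).map desSet).countP (· ≤ S) =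
      (sh u v).countP (fun w => Forall₂ (· ≤ ·) (descents (a :: w))
        ((range (u.length + v.length)).map fun i => decide (i + 1 ∈ S))) := by
    rw [hsL, Multiset.map_map, Multiset.countP_map, ← Multiset.countP_eq_card_filter]
    refine Multiset.countP_congr rfl fun w hw => ?_
    simp [desSet_subset_iff_forall₂_descents, length_of_mem_sh hw]
  rw [hcount, hcount, length_eq_of_descents_cons_eq hu, length_eq_of_descents_cons_eq hv]
  exact countP_sh_forall₂_descents_congr _ huv huv' hu hv

lemma map_descComp_eq_map_compOfSet {s : Multiset (List ℕ)} {n : ℕ}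
    (hs : ∀ w ∈ s, w.length = n) : s.map descComp = (s.map desSet).map (compOfSet n) := by
  rw [Multiset.map_map]
  exact Multiset.map_congr rfl fun w hw => by simp [descComp, hs w hw]

theorem map_descComp_hsL_congr {a a' : ℕ} {u v u' v' : List ℕ}
    (huv : ∀ c ∈ u, c ∉ v) (huv' : ∀ c ∈ u', c ∉ v')
    (hu : descents (a :: u) = descents (a' :: u')) (hv : descents (a :: v) = descents (a' :: v')) :
    (hsL (a :: u) v).map descComp = (hsL (a' :: u') v').map descComp := by
  rw [map_descComp_eq_map_compOfSet fun _ => length_of_mem_hsL,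
    map_descComp_eq_map_compOfSet fun _ => length_of_mem_hsL,
    map_desSet_hsL_congr huv huv' hu hv, length_eq_of_descents_cons_eq hu,
    length_eq_of_descents_cons_eq hv]

def stdRank (w : List ℕ) (p : ℕ) : ℕ :=
  ((Finset.range w.length).filter fun q => toLex (w.getD q 0, q) < toLex (w.getD p 0, p)).card

@[simp] lemma length_stdW (w : List ℕ) : (stdW w).length = w.length := by simp [stdW]

lemma getElem_stdW (w : List ℕ) {p : ℕ} (hp : p < (stdW w).length) :
    (stdW w)[p] = 1 + stdRank w p := by
  simp only [stdW, getElem_map, getElem_range, stdRank, Prod.Lex.toLex_lt_toLex]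
  rfl

lemma stdRank_lt_stdRank (w : List ℕ) {p q : ℕ} (hp : p < w.length)
    (h : toLex (w.getD p 0, p) < toLex (w.getD q 0, q)) : stdRank w p < stdRank w q := by
  refine Finset.card_lt_card <| (Finset.ssubset_iff_of_subset fun r hr => ?_).2 ⟨p, ?_, ?_⟩
  · simp only [Finset.mem_filter] at hr ⊢
    exact ⟨hr.1, hr.2.trans h⟩
  · simpa [hp] using h
  · simp

lemma stdRank_lt_length (w : List ℕ) {p : ℕ} (hp : p < w.length) : stdRank w p < w.length := by
  rw [← Finset.card_range w.length]
  refine Finset.card_lt_card <| (Finset.ssubset_iff_of_subset fun r hr => ?_).2 ⟨p, ?_, ?_⟩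
  · exact (Finset.mem_filter.1 hr).1
  · simp [hp]
  · simp

lemma stdRank_lt_stdRank_iff (w : List ℕ) {p q : ℕ} (hp : p < w.length) (hq : q < w.length)
    (hpq : p ≠ q) :
    stdRank w p < stdRank w q ↔ toLex (w.getD p 0, p) < toLex (w.getD q 0, q) := by
  refine ⟨fun h => ?_, stdRank_lt_stdRank w hp⟩
  rcases lt_trichotomy (toLex (w.getD p 0, p)) (toLex (w.getD q 0, q)) with hlt | heq | hgt
  · exact hlt
  · exact absurd (congrArg (·.2) heq) hpq
  · exact absurd (stdRank_lt_stdRank w hq hgt) h.not_gt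

lemma descents_stdW (w : List ℕ) : descents (stdW w) = descents w := by
  refine ext_getElem (by simp) fun i h₁ h₂ => ?_
  simp only [length_descents, length_stdW] at h₁ h₂
  simp only [getElem_descents, getElem_stdW, add_lt_add_iff_left, decide_eq_decide]
  rw [stdRank_lt_stdRank_iff w (by omega) (by omega) (by omega), Prod.Lex.toLex_lt_toLex,
    getD_eq_getElem _ _ (by omega), getD_eq_getElem _ _ (by omega)]
  omega

lemma mem_stdW_bounds {w : List ℕ} {x : ℕ} (hx : x ∈ stdW w) : 0 < x ∧ x ≤ w.length := by
  obtain ⟨p, hp, rfl⟩ := getElem_of_mem hx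
  have := stdRank_lt_length w (p := p) (by simpa using hp)
  rw [getElem_stdW]
  omega

lemma lt_of_mem_stdW_of_mem_map_add_stdW {w w' : List ℕ} {x y : ℕ} (hx : x ∈ stdW w)
    (hy : y ∈ (stdW w').map (· + w.length)) : x < y := by
  obtain ⟨y, hy', rfl⟩ := mem_map.1 hy
  have := mem_stdW_bounds hx
  have := mem_stdW_bounds hy'
  omega

theorem map_descComp_hsL_eq_of_separated {a b : ℕ} {u v σ τ : List ℕ}
    (hσ : σ ≠ []) (hτ : τ ≠ []) (huv : ∀ x ∈ u, x ∉ b :: v) (hστ : ∀ x ∈ σ, x ∉ τ)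
    (hdu : descents σ = descents (a :: u)) (hdv : descents τ = descents (b :: v))
    (hsep : ∀ x ∈ σ, ∀ y ∈ τ, y < x ↔ b < a) :
    (hsL (a :: u) (b :: v)).map descComp = (hsL σ τ).map descComp := by
  obtain ⟨s, σ, rfl⟩ := exists_cons_of_ne_nil hσ
  obtain ⟨t, τ, rfl⟩ := exists_cons_of_ne_nil hτ
  refine map_descComp_hsL_congr huv (fun x hx => hστ x (mem_cons_of_mem s hx)) hdu.symm ?_
  rw [descents_cons_cons, descents_cons_cons, hdv]
  simp [hsep s mem_cons_self t mem_cons_self]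

/-- If `u` and `v` are nonempty words on disjoint alphabets, the multiset of descent
compositions of the words of `u ≺′ v` equals that of `σ ≺′ τ`, where
`σ = std(u), τ = std(v)[|u|]` if `u₁ < v₁`, and `σ = std(u)[|v|], τ = std(v)` if
`u₁ > v₁`. -/
theorem descComp_half_shuffle_std (u v : List ℕ) (hu : u ≠ []) (hv : v ≠ [])
    (hdisj : ∀ x, x ∈ u → x ∉ v) :
    (hsL u v).map descComp =
      (if u.headD 0 < v.headD 0
        then hsL (stdW u) ((stdW v).map (· + u.length))
        else hsL ((stdW u).map (· + v.length)) (stdW v)).map descComp := by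
  obtain ⟨a, u, rfl⟩ := exists_cons_of_ne_nil hu
  obtain ⟨b, v, rfl⟩ := exists_cons_of_ne_nil hv
  have hab : a ≠ b := fun h => hdisj a mem_cons_self (h ▸ mem_cons_self)
  have hstd (w : List ℕ) (hw : w ≠ []) : stdW w ≠ [] := by
    simpa [← length_pos_iff] using hw
  have hshift (m : ℕ) (w : List ℕ) : descents ((stdW w).map (· + m)) = descents w := by
    rw [descents_map_of_strictMono (f := (· + m)) (strictMono_id.add_const m), descents_stdW]
  have huv : ∀ x ∈ u, x ∉ b :: v := fun x hx => hdisj x (mem_cons_of_mem a hx)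
  split_ifs with hlt
  · exact map_descComp_hsL_eq_of_separated (hstd _ hu) (by simpa using hstd _ hv) huv
      (fun x hx hy => (lt_of_mem_stdW_of_mem_map_add_stdW hx hy).false)
      (descents_stdW _) (hshift _ _)
      (fun x hx y hy =>
        iff_of_false (lt_of_mem_stdW_of_mem_map_add_stdW hx hy).not_gt hlt.not_gt)
  · exact map_descComp_hsL_eq_of_separated (by simpa using hstd _ hu) (hstd _ hv) huv
      (fun x hx hy => (lt_of_mem_stdW_of_mem_map_add_stdW hy hx).false)
      (hshift _ _) (descents_stdW _)
      (fun x hx y hy => iff_of_true (lt_of_mem_stdW_of_mem_map_add_stdW hy hx)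
        ((not_lt.1 hlt).lt_of_ne hab.symm))
end
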